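/- arXiv:2205.12423 — 2 statements merged into one kernel-verified Lean document; each statement's English description precedes it below -/
import Mathlib

section
/- Let h : ℝ → ℝ be nondecreasing and let β_1 ≥ β_2 ≥ ... ≥ β_n be reals. Define f : {0,1}^n → ℝ by f(z) = h(β_0 + Σ_j β_j z_j). Then the Shapley values of f satisfy φ_1 ≥ φ_2 ≥ ... ≥ φ_n. -/
open Finset

/-- Shapley value of coordinate `j` for `f : {0,1}^n → ℝ`, with points of
`{0,1}^n` identified with subsets of `Fin n`. -/
noncomputable def shapley {n : ℕ} (f : Finset (Fin n) → ℝ) (j : Fin n) : ℝ :=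
  ∑ S ∈ ((univ : Finset (Fin n)).erase j).powerset,
    ((S.card.factorial * (n - S.card - 1).factorial : ℕ) : ℝ) / (n.factorial : ℝ)
      * (f (insert j S) - f S)

/-!
If raising coordinate `i` always helps `f` at least as much as raising `j`, that is
`f (S ∪ {j}) ≤ f (S ∪ {i})` for every `S` avoiding both, then `φ_j ≤ φ_i`: splitting the
coalitions in either Shapley sum according to whether they contain the other coordinate,
`φ_i - φ_j` becomes a nonnegative combination of the differences `f (S ∪ {i}) - f (S ∪ {j})`.
For `f(z) = h(β₀ + Σ_l β_l z_l)` with `h` monotone, `β_j ≤ β_i` gives exactly this hypothesis.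
-/

noncomputable def shapleyWeight (n k : ℕ) : ℝ :=
  ((k.factorial * (n - k - 1).factorial : ℕ) : ℝ) / (n.factorial : ℝ)

lemma shapleyWeight_nonneg (n k : ℕ) : 0 ≤ shapleyWeight n k := by
  unfold shapleyWeight
  positivity

lemma shapley_eq_sum_shapleyWeight {n : ℕ} (f : Finset (Fin n) → ℝ) (j : Fin n) :
    shapley f j = ∑ S ∈ ((univ : Finset (Fin n)).erase j).powerset,
      shapleyWeight n S.card * (f (insert j S) - f S) :=
  rfl

lemma notMem_of_mem_powerset_erase_erase {n : ℕ} {i j : Fin n} {S : Finset (Fin n)}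
    (hS : S ∈ (((univ : Finset (Fin n)).erase i).erase j).powerset) : i ∉ S ∧ j ∉ S :=
  ⟨fun h => notMem_erase i _ (mem_of_mem_erase (mem_powerset.1 hS h)),
    fun h => notMem_erase j _ (mem_powerset.1 hS h)⟩

lemma sum_powerset_erase_eq_sum_add_insert {n : ℕ} {i j : Fin n} (hij : i ≠ j)
    (g : Finset (Fin n) → ℝ) :
    ∑ S ∈ ((univ : Finset (Fin n)).erase j).powerset, g S
      = ∑ S ∈ (((univ : Finset (Fin n)).erase i).erase j).powerset, (g S + g (insert i S)) := by
  have hi : i ∈ (univ : Finset (Fin n)).erase j := mem_erase.2 ⟨hij, mem_univ i⟩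
  have hi' : i ∉ ((univ : Finset (Fin n)).erase i).erase j :=
    fun h => notMem_erase i univ (mem_of_mem_erase h)
  rw [← insert_erase hi, erase_right_comm, sum_powerset_insert hi', ← sum_add_distrib]

lemma shapley_sub_shapley {n : ℕ} (f : Finset (Fin n) → ℝ) {i j : Fin n} (hij : i ≠ j) :
    shapley f i - shapley f j
      = ∑ S ∈ (((univ : Finset (Fin n)).erase i).erase j).powerset,
          (shapleyWeight n S.card + shapleyWeight n (S.card + 1))
            * (f (insert i S) - f (insert j S)) := by
  rw [shapley_eq_sum_shapleyWeight, shapley_eq_sum_shapleyWeight,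
    sum_powerset_erase_eq_sum_add_insert hij.symm, sum_powerset_erase_eq_sum_add_insert hij,
    erase_right_comm, ← sum_sub_distrib]
  refine sum_congr rfl fun S hS => ?_
  obtain ⟨hiS, hjS⟩ := notMem_of_mem_powerset_erase_erase hS
  rw [card_insert_of_notMem hiS, card_insert_of_notMem hjS, insert_comm i j S]
  ring

lemma shapley_le_shapley_of_forall_insert_le {n : ℕ} (f : Finset (Fin n) → ℝ) {i j : Fin n}
    (hf : ∀ S, i ∉ S → j ∉ S → f (insert j S) ≤ f (insert i S)) :
    shapley f j ≤ shapley f i := by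
  rcases eq_or_ne i j with rfl | hij
  · rfl
  rw [← sub_nonneg, shapley_sub_shapley f hij]
  refine sum_nonneg fun S hS => mul_nonneg
    (add_nonneg (shapleyWeight_nonneg _ _) (shapleyWeight_nonneg _ _)) (sub_nonneg.2 ?_)
  obtain ⟨hiS, hjS⟩ := notMem_of_mem_powerset_erase_erase hS
  exact hf S hiS hjS

/-- If `h` is nondecreasing and `β₁ ≥ β₂ ≥ ⋯ ≥ β_n`, then the Shapley values of
`f(z) = h(β₀ + Σ_j β_j z_j)` satisfy `φ₁ ≥ φ₂ ≥ ⋯ ≥ φ_n`. -/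
theorem shapley_monotone_of_increasing_additive (n : ℕ) (h : ℝ → ℝ)
    (hh : Monotone h) (β₀ : ℝ) (β : Fin n → ℝ)
    (hβ : ∀ i j : Fin n, i ≤ j → β j ≤ β i) :
    ∀ i j : Fin n, i ≤ j →
      shapley (fun z => h (β₀ + ∑ l ∈ z, β l)) j
        ≤ shapley (fun z => h (β₀ + ∑ l ∈ z, β l)) i := by
  intro i j hij
  refine shapley_le_shapley_of_forall_insert_le _ fun S hiS hjS => hh ?_
  rw [sum_insert hjS, sum_insert hiS]
  linarith [hβ i j hij]
end

section
/- Let h : ℝ → ℝ be strictly increasing, β_0 ∈ ℝ, and β_1,...,β_n ∈ ℝ. Let π be a permutation of {1,...,n}, and let π' be obtained from π by swapping positions r and r+1. Then AUC(π') − AUC(π) = h(β_0 + Σ_{ℓ<r} β_{π(ℓ)} + β_{π(r+1)}) − h(β_0 + Σ_{ℓ≤r} β_{π(ℓ)}); in particular, if β_{π(r+1)} < β_{π(r)} then AUC(π') < AUC(π). -/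
/-! Swapping positions `r` and `r + 1` changes only the prefix of length `r + 1` as a set, so
exactly one summand of the AUC changes: in it `β (π r)` is replaced by `β (π (r + 1))`, and the
sign of the change follows from the monotonicity of `h`. -/

open Finset

/-- `AUC(σ) = Σ_{j=0}^n h(β₀ + Σ_{ℓ=1}^j β_{σ(ℓ)})`, where positions
`1,...,n` are represented by `Fin n` (position `ℓ` has `ℓ.val = ℓ − 1`). -/
noncomputable def aucMono {n : ℕ} (h : ℝ → ℝ) (β₀ : ℝ) (β : Fin n → ℝ)
    (σ : Equiv.Perm (Fin n)) : ℝ :=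
  ∑ j ∈ Finset.range (n + 1),
    h (β₀ + ∑ l ∈ univ.filter fun i : Fin n => i.val < j, β (σ l))

theorem Finset.swap_apply_mem_iff {α : Type*} [DecidableEq α] {s : Finset α} {a b x : α}
    (hab : a ∈ s ↔ b ∈ s) : Equiv.swap a b x ∈ s ↔ x ∈ s := by
  rcases eq_or_ne x a with rfl | hxa
  · rw [Equiv.swap_apply_left, hab]
  rcases eq_or_ne x b with rfl | hxb
  · rw [Equiv.swap_apply_right, hab]
  · rw [Equiv.swap_apply_of_ne_of_ne hxa hxb]

theorem Finset.sum_comp_swap {α M : Type*} [DecidableEq α] [AddCommMonoid M] {s : Finset α}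
    {a b : α} (hab : a ∈ s ↔ b ∈ s) (f : α → M) :
    ∑ x ∈ s, f (Equiv.swap a b x) = ∑ x ∈ s, f x :=
  sum_equiv (Equiv.swap a b) (fun _ => (swap_apply_mem_iff hab).symm) (fun _ _ => rfl)

namespace Fin

variable {n : ℕ}

theorem filter_val_lt_succ (r : Fin n) :
    univ.filter (fun i : Fin n => i.val < r.val + 1) =
      insert r (univ.filter fun i : Fin n => i.val < r.val) := by
  ext i
  simp only [mem_filter, mem_univ, true_and, mem_insert, Fin.ext_iff]
  omega

theorem sum_filter_val_le {M : Type*} [AddCommMonoid M] (f : Fin n → M) (r : Fin n) :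
    ∑ l ∈ univ.filter (fun i : Fin n => i.val ≤ r.val), f l =
      ∑ l ∈ univ.filter (fun i : Fin n => i.val < r.val), f l + f r := by
  simp_rw [Nat.le_iff_lt_add_one, filter_val_lt_succ]
  rw [sum_insert (by simp), add_comm]

end Fin

section AdjacentSwap

variable {n : ℕ} (r : Fin n) (hr : r.val + 1 < n)

theorem Fin.sum_filter_val_lt_comp_swap_of_ne {M : Type*} [AddCommMonoid M] (f : Fin n → M)
    {j : ℕ} (hj : j ≠ r.val + 1) :
    ∑ l ∈ univ.filter (fun i : Fin n => i.val < j), f (Equiv.swap r ⟨r.val + 1, hr⟩ l) =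
      ∑ l ∈ univ.filter (fun i : Fin n => i.val < j), f l :=
  sum_comp_swap (by simp only [mem_filter, mem_univ, true_and]; omega) f

theorem Fin.sum_filter_val_lt_succ_comp_swap {M : Type*} [AddCommMonoid M] (f : Fin n → M) :
    ∑ l ∈ univ.filter (fun i : Fin n => i.val < r.val + 1),
        f (Equiv.swap r ⟨r.val + 1, hr⟩ l) =
      ∑ l ∈ univ.filter (fun i : Fin n => i.val < r.val), f l + f ⟨r.val + 1, hr⟩ := by
  rw [filter_val_lt_succ, sum_insert (by simp), Equiv.swap_apply_left, add_comm,
    sum_comp_swap (by simp only [mem_filter, mem_univ, true_and]; omega)]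

theorem aucMono_swap_sub (h : ℝ → ℝ) (β₀ : ℝ) (β : Fin n → ℝ)
    (π : Equiv.Perm (Fin n)) :
    aucMono h β₀ β ((Equiv.swap r ⟨r.val + 1, hr⟩).trans π) - aucMono h β₀ β π
      = h (β₀ + (∑ l ∈ univ.filter fun i : Fin n => i.val < r.val, β (π l))
            + β (π ⟨r.val + 1, hr⟩))
        - h (β₀ + ∑ l ∈ univ.filter fun i : Fin n => i.val ≤ r.val, β (π l)) := by
  unfold aucMono
  simp only [Equiv.trans_apply]
  rw [← sum_sub_distrib, sum_eq_single_of_mem (r.val + 1) (mem_range.2 (by omega))]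
  · rw [Fin.sum_filter_val_lt_succ_comp_swap r hr (fun l => β (π l)), ← add_assoc]
    simp only [Nat.lt_add_one_iff]
  · intro j _ hj
    rw [Fin.sum_filter_val_lt_comp_swap_of_ne r hr (fun l => β (π l)) hj, sub_self]

end AdjacentSwap

/-- Swapping adjacent positions `r` and `r+1` of a permutation changes the AUC
by `h(β₀ + Σ_{ℓ<r} β_{π(ℓ)} + β_{π(r+1)}) − h(β₀ + Σ_{ℓ≤r} β_{π(ℓ)})`; in
particular, for strictly increasing `h`, if `β_{π(r+1)} < β_{π(r)}` then the
swap strictly decreases the AUC. -/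
theorem auc_adjacent_swap (n : ℕ) (h : ℝ → ℝ) (hh : StrictMono h)
    (β₀ : ℝ) (β : Fin n → ℝ) (π : Equiv.Perm (Fin n))
    (r : Fin n) (hr : r.val + 1 < n) :
    aucMono h β₀ β ((Equiv.swap r ⟨r.val + 1, hr⟩).trans π)
        - aucMono h β₀ β π
      = h (β₀ + (∑ l ∈ univ.filter fun i : Fin n => i.val < r.val, β (π l))
            + β (π ⟨r.val + 1, hr⟩))
        - h (β₀ + ∑ l ∈ univ.filter fun i : Fin n => i.val ≤ r.val, β (π l))
    ∧ (β (π ⟨r.val + 1, hr⟩) < β (π r) →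
        aucMono h β₀ β ((Equiv.swap r ⟨r.val + 1, hr⟩).trans π)
          < aucMono h β₀ β π) := by
  have hdiff := aucMono_swap_sub r hr h β₀ β π
  refine ⟨hdiff, fun hlt => ?_⟩
  rw [← sub_neg, hdiff, sub_neg, Fin.sum_filter_val_le, ← add_assoc]
  exact hh (by linarith)
end
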